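/- Heine-type formula (abstract form): Let $(X,\mu)$ be a measure space, $\zeta_0,\dots,\zeta_n$ functions on $X$ with all pairwise products integrable, and set $\mu_{a,b}=\int_X\zeta_a\zeta_b\,d\mu$. Define $\Psi_n(p)=\int_{X^n}\det[\zeta_{a-1}(p_b)]_{a,b=1}^{n+1}\,\det[\zeta_{a-1}(p_b)]_{a,b=1}^{n}\,\prod_{j=1}^n d\mu(p_j)$ where $p_{n+1}=p$. Then $\Psi_n(p)=n!\,\det\begin{pmatrix}\mu_{0,0}&\cdots&\mu_{0,n}\\ \vdots&&\vdots\\ \mu_{n-1,0}&\cdots&\mu_{n-1,n}\\ \zeta_0(p)&\cdots&\zeta_n(p)\end{pmatrix}$, and consequently $\int_X\Psi_n(p)\,\zeta_j(p)\,d\mu(p)=0$ for all $0\le j\le n-1$. -/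

import Mathlib

/-!
Expanding the `(n+1)`-determinant along its last column (the one evaluated at `p`) writes the
integrand as a combination of the values `ζ i p` times products of two `n × n` determinants.
Andréief's identity `∫ det[f a (x b)] * det[g a (x b)] dμⁿ = n! * det[∫ f a * g b dμ]`, obtained by
expanding both determinants and integrating each product of one-variable factors by Fubini,
integrates each of these, and what comes out is the Laplace expansion of the bordered Gram
determinant along its last row. That determinant is linear in its last row, so integrating it
against `ζ j` replaces the row `ζ · p` by the Gram row of `ζ j`, which for `j < n` repeats an
earlier row.
-/

open MeasureTheory Matrix BigOperators

open Equiv Finset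

namespace Matrix

variable {ι R : Type*} [Fintype ι] [DecidableEq ι] [CommRing R]

theorem sum_perm_sum_perm_sign_mul_sign_mul_prod (A : Matrix ι ι R) :
    ∑ σ : Perm ι, ∑ τ : Perm ι,
      ((Perm.sign σ : ℤ) : R) * (Perm.sign τ : ℤ) * ∏ b, A (σ b) (τ b) =
      (Fintype.card ι).factorial * A.det := by
  have row_perm (σ : Perm ι) :
      ∑ τ : Perm ι, ((Perm.sign σ : ℤ) : R) * (Perm.sign τ : ℤ) * ∏ b, A (σ b) (τ b) = A.det := by
    have h := det_permute σ A
    rw [← det_transpose, det_apply'] at h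
    simp only [transpose_apply, submatrix_apply, id_eq] at h
    simp_rw [mul_assoc, ← mul_sum]
    rw [h, ← mul_assoc, ← Int.cast_mul, ← Units.val_mul, Int.units_mul_self, Units.val_one,
      Int.cast_one, one_mul]
  simp_rw [row_perm, sum_const, card_univ, Fintype.card_perm, nsmul_eq_mul]

theorem det_mul_det_eq_sum_perm {X : Type*} (f g : ι → X → R) (x : ι → X) :
    det (of fun a b => f a (x b)) * det (of fun a b => g a (x b)) =
      ∑ σ : Perm ι, ∑ τ : Perm ι, ((Perm.sign σ : ℤ) : R) * (Perm.sign τ : ℤ) *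
        ∏ b, f (σ b) (x b) * g (τ b) (x b) := by
  simp only [det_apply', of_apply, sum_mul_sum, prod_mul_distrib]
  exact sum_congr rfl fun σ _ => sum_congr rfl fun τ _ => by ring

variable {n : ℕ}

theorem det_of_lastCases_point {X : Type*} (f : Fin (n + 1) → X → R) (p : X) (x : Fin n → X) :
    det (of fun a b => f a (Fin.lastCases p x b)) =
      ∑ i : Fin (n + 1),
        (-1) ^ ((i : ℕ) + n) * f i p * det (of fun a b => f (i.succAbove a) (x b)) := by
  rw [det_succ_column _ (Fin.last n)]
  simp only [Fin.val_last, Fin.succAbove_last, of_apply, Fin.lastCases_last]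
  refine sum_congr rfl fun i _ => congrArg _ (congrArg det ?_)
  ext a b
  simp

theorem det_of_lastCases_row (r : Fin (n + 1) → R) (M : Fin n → Fin (n + 1) → R) :
    det (of fun j ℓ => Fin.lastCases (r ℓ) (fun i => M i ℓ) j) =
      ∑ ℓ : Fin (n + 1),
        (-1) ^ (n + (ℓ : ℕ)) * r ℓ * det (of fun a b => M a (ℓ.succAbove b)) := by
  rw [det_succ_row _ (Fin.last n)]
  simp only [Fin.val_last, Fin.succAbove_last, of_apply, Fin.lastCases_last]
  refine sum_congr rfl fun i _ => congrArg _ (congrArg det ?_)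
  ext a b
  simp

end Matrix

namespace MeasureTheory

variable {X 𝕜 : Type*} [MeasurableSpace X] [RCLike 𝕜] {μ : Measure X}

section Bordered

variable {n : ℕ}

theorem integral_det_of_lastCases_row_mul (v : Fin (n + 1) → X → 𝕜) (h : X → 𝕜)
    (M : Fin n → Fin (n + 1) → 𝕜) (hvh : ∀ ℓ, Integrable (fun p => v ℓ p * h p) μ) :
    ∫ p, det (of fun j ℓ => Fin.lastCases (v ℓ p) (fun i => M i ℓ) j) * h p ∂μ =
      det (of fun j ℓ => Fin.lastCases (∫ p, v ℓ p * h p ∂μ) (fun i => M i ℓ) j) := by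
  have expand (p : X) :
      det (of fun j ℓ => Fin.lastCases (v ℓ p) (fun i => M i ℓ) j) * h p =
        ∑ ℓ : Fin (n + 1), (-1) ^ (n + (ℓ : ℕ)) * det (of fun a b => M a (ℓ.succAbove b)) *
          (v ℓ p * h p) := by
    rw [det_of_lastCases_row, sum_mul]
    exact sum_congr rfl fun ℓ _ => by ring
  simp_rw [expand]
  rw [integral_finsetSum _ fun ℓ _ => (hvh ℓ).const_mul _, det_of_lastCases_row]
  simp_rw [integral_const_mul]
  exact sum_congr rfl fun ℓ _ => by ring

end Bordered

section Andreief

variable {ι : Type*} [Fintype ι] [DecidableEq ι] [SigmaFinite μ] {f g : ι → X → 𝕜}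

theorem integrable_det_mul_det (hfg : ∀ a b, Integrable (fun y => f a y * g b y) μ) :
    Integrable (fun x => det (of fun a b => f a (x b)) * det (of fun a b => g a (x b)))
      (Measure.pi fun _ => μ) := by
  simp_rw [det_mul_det_eq_sum_perm]
  exact integrable_finsetSum _ fun σ _ => integrable_finsetSum _ fun τ _ =>
    (Integrable.fintype_prod fun b => hfg (σ b) (τ b)).const_mul _

theorem integral_det_mul_det (hfg : ∀ a b, Integrable (fun y => f a y * g b y) μ) :
    ∫ x, det (of fun a b => f a (x b)) * det (of fun a b => g a (x b)) ∂(Measure.pi fun _ => μ) =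
      (Fintype.card ι).factorial * det (of fun a b => ∫ y, f a y * g b y ∂μ) := by
  have term (σ τ : Perm ι) :
      Integrable (fun x : ι → X => ((Perm.sign σ : ℤ) : 𝕜) * (Perm.sign τ : ℤ) *
        ∏ b, f (σ b) (x b) * g (τ b) (x b)) (Measure.pi fun _ => μ) :=
    (Integrable.fintype_prod fun b => hfg (σ b) (τ b)).const_mul _
  simp_rw [det_mul_det_eq_sum_perm]
  rw [integral_finsetSum _ fun σ _ => integrable_finsetSum _ fun τ _ => term σ τ]
  have fubini (σ τ : Perm ι) :
      ∫ x, ∏ b, f (σ b) (x b) * g (τ b) (x b) ∂(Measure.pi fun _ => μ) =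
        ∏ b, ∫ y, f (σ b) y * g (τ b) y ∂μ :=
    integral_fintype_prod_eq_prod fun b y => f (σ b) y * g (τ b) y
  simp_rw [integral_finsetSum _ fun τ _ => term _ τ, integral_const_mul, fubini]
  exact sum_perm_sum_perm_sign_mul_sign_mul_prod (of fun a b => ∫ y, f a y * g b y ∂μ)

end Andreief

variable [SigmaFinite μ] {n : ℕ}

theorem integral_det_of_lastCases_point_mul_det (ζ : Fin (n + 1) → X → 𝕜)
    (hζ : ∀ a b, Integrable (fun x => ζ a x * ζ b x) μ) (p : X) :
    ∫ x, det (of fun a b => ζ a (Fin.lastCases p x b)) *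
        det (of fun a b : Fin n => ζ a.castSucc (x b)) ∂(Measure.pi fun _ => μ) =
      n.factorial * det (of fun j ℓ =>
        Fin.lastCases (ζ ℓ p) (fun i : Fin n => ∫ x, ζ i.castSucc x * ζ ℓ x ∂μ) j) := by
  have expand (x : Fin n → X) :
      det (of fun a b => ζ a (Fin.lastCases p x b)) *
          det (of fun a b : Fin n => ζ a.castSucc (x b)) =
        ∑ i : Fin (n + 1), (-1) ^ ((i : ℕ) + n) * ζ i p *
          (det (of fun a b => ζ (i.succAbove a) (x b)) *
            det (of fun a b => ζ a.castSucc (x b))) := by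
    rw [det_of_lastCases_point, sum_mul]
    exact sum_congr rfl fun i _ => by ring
  have minor_transpose (i : Fin (n + 1)) :
      det (of fun a b => ∫ x, ζ (i.succAbove a) x * ζ b.castSucc x ∂μ) =
        det (of fun a b => ∫ x, ζ a.castSucc x * ζ (i.succAbove b) x ∂μ) := by
    rw [← det_transpose]
    congr 1
    ext a b
    simp only [transpose_apply, of_apply, mul_comm]
  simp_rw [expand]
  rw [integral_finsetSum _ fun i _ =>
    (integrable_det_mul_det fun a b => hζ (i.succAbove a) b.castSucc).const_mul _]
  simp_rw [integral_const_mul, integral_det_mul_det fun a b => hζ _ (Fin.castSucc b),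
    Fintype.card_fin, minor_transpose, det_of_lastCases_row, mul_sum]
  exact sum_congr rfl fun i _ => by ring

end MeasureTheory

/-- Heine-type formula (Proposition 2.11): the multiple-integral section
`Ψₙ(p) = ∫_{Xⁿ} det[ζ_{a-1}(p_b)]_{(n+1)×(n+1)} det[ζ_{a-1}(p_b)]_{n×n} dμⁿ`
(with `p_{n+1} = p`) equals `n!` times the bordered Gram determinant, and is
therefore orthogonal to `ζ₀,…,ζ_{n-1}`. -/
theorem stmt5 {X : Type*} [MeasurableSpace X] (μ : Measure X) [SigmaFinite μ]
    (n : ℕ) (ζ : Fin (n + 1) → X → ℂ)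
    (hint : ∀ a b, Integrable (fun x => ζ a x * ζ b x) μ)
    (Ψ : X → ℂ)
    (hΨ : ∀ p : X, Ψ p =
      ∫ x : Fin n → X,
        (Matrix.det (Matrix.of fun a b : Fin (n + 1) =>
          ζ a (Fin.lastCases p (fun j : Fin n => x j) b))) *
        (Matrix.det (Matrix.of fun a b : Fin n => ζ a.castSucc (x b)))
        ∂(Measure.pi fun _ : Fin n => μ)) :
    (∀ p : X, Ψ p = (n.factorial : ℂ) *
      Matrix.det (Matrix.of fun j ℓ : Fin (n + 1) =>
        Fin.lastCases (ζ ℓ p)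
          (fun i : Fin n => ∫ x, ζ i.castSucc x * ζ ℓ x ∂μ) j)) ∧
    (∀ j : Fin n, ∫ p, Ψ p * ζ j.castSucc p ∂μ = 0) := by
  have heine (p : X) := (hΨ p).trans (integral_det_of_lastCases_point_mul_det ζ hint p)
  refine ⟨heine, fun j => ?_⟩
  simp_rw [heine, mul_assoc, integral_const_mul,
    integral_det_of_lastCases_row_mul _ _ _ fun ℓ => hint ℓ j.castSucc]
  -- the last row of the integrated bordered matrix repeats its row `j`
  rw [det_zero_of_row_eq (Fin.castSucc_lt_last j).ne, mul_zero]
  ext ℓ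
  simp [mul_comm]
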